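/- Let V₁, V₂ be Hermitian matrices in ℂ^{N×N}, D a real diagonal matrix, and τ > 0. If Φᵏ is generated by the semi-implicit scheme Φ^{k+1} = (I + iτD)^{-1}(I - iτ(V₁+V₂))Φᵏ, then ‖Φᵏ‖₂ ≤ (1 + Eτ)ᵏ ‖Φ⁰‖₂, where E = ‖V₁ + V₂‖₂ (stability of the semi-implicit method with exponential growth factor). -/

import Mathlib

/-!
Since `Re (1 + iτdᵢ) = 1`, the implicit factor `(I + iτD)⁻¹` is diagonal with entries of modulus
at most one, hence a contraction for the `ℓ²` operator norm; the explicit factor `I - iτ(V₁ + V₂)`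
has norm at most `1 + τ‖V₁ + V₂‖` by the triangle inequality. One step of the scheme therefore
amplifies by at most `1 + τ‖V₁ + V₂‖`, and `k` steps by its `k`-th power.
-/

open Matrix
open scoped Matrix.Norms.L2Operator

namespace Matrix

variable {𝕜 : Type*} [RCLike 𝕜] {n : Type*} [Fintype n] [DecidableEq n]

lemma l2_opNorm_one_le : ‖(1 : Matrix n n 𝕜)‖ ≤ 1 := by
  rw [← diagonal_one, l2_opNorm_diagonal]
  exact pi_norm_le_iff_of_nonneg zero_le_one |>.mpr fun _ => norm_one.le

lemma l2_opNorm_one_sub_smul_le (c : 𝕜) (W : Matrix n n 𝕜) :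
    ‖1 - c • W‖ ≤ 1 + ‖c‖ * ‖W‖ :=
  calc ‖1 - c • W‖ ≤ ‖(1 : Matrix n n 𝕜)‖ + ‖c • W‖ := norm_sub_le _ _
    _ ≤ 1 + ‖c‖ * ‖W‖ := by grw [l2_opNorm_one_le, norm_smul_le]

lemma l2_opNorm_pow_mulVec_le {B : Matrix n n 𝕜} {C : ℝ} (hB : ‖B‖ ≤ C)
    (x : EuclideanSpace 𝕜 n) (k : ℕ) :
    ‖(EuclideanSpace.equiv n 𝕜).symm (B ^ k *ᵥ x)‖ ≤ C ^ k * ‖x‖ := by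
  induction k with
  | zero => simp
  | succ k ih =>
    have hC : 0 ≤ C := (norm_nonneg B).trans hB
    calc ‖(EuclideanSpace.equiv n 𝕜).symm (B ^ (k + 1) *ᵥ x)‖
        = ‖(EuclideanSpace.equiv n 𝕜).symm
            (B *ᵥ (EuclideanSpace.equiv n 𝕜).symm (B ^ k *ᵥ x))‖ := by
          rw [pow_succ', ← mulVec_mulVec]; rfl
      _ ≤ ‖B‖ * ‖(EuclideanSpace.equiv n 𝕜).symm (B ^ k *ᵥ x)‖ := l2_opNorm_mulVec _ _
      _ ≤ C * (C ^ k * ‖x‖) := by gcongr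
      _ = C ^ (k + 1) * ‖x‖ := by ring

lemma inv_diagonal_of_ne_zero {d : n → 𝕜} (hd : ∀ i, d i ≠ 0) :
    (diagonal d)⁻¹ = diagonal fun i => (d i)⁻¹ :=
  inv_eq_left_inv <| by rw [diagonal_mul_diagonal]; simp [hd]

lemma l2_opNorm_inv_diagonal_le_one {d : n → 𝕜} (hd : ∀ i, 1 ≤ ‖d i‖) :
    ‖(diagonal d)⁻¹‖ ≤ 1 := by
  have hd0 : ∀ i, d i ≠ 0 := fun i => norm_pos_iff.mp (zero_lt_one.trans_le (hd i))
  rw [inv_diagonal_of_ne_zero hd0, l2_opNorm_diagonal]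
  exact pi_norm_le_iff_of_nonneg zero_le_one |>.mpr fun i => by
    simpa only [norm_inv] using inv_le_one_of_one_le₀ (hd i)

end Matrix

lemma Complex.one_le_norm_one_add_I_mul_ofReal (x : ℝ) : 1 ≤ ‖1 + Complex.I * x‖ := by
  simpa using Complex.abs_re_le_norm (1 + Complex.I * x)

lemma Matrix.IsDiag.one_add_smul_map_ofReal {n : Type*} [Fintype n] [DecidableEq n]
    {D : Matrix n n ℝ} (hD : D.IsDiag) (c : ℂ) :
    1 + c • D.map Complex.ofReal = diagonal fun i => 1 + c * D i i := by
  conv_lhs => rw [← hD.diagonal_diag, diagonal_map Complex.ofReal_zero, ← diagonal_one,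
    ← diagonal_smul, diagonal_add]
  rfl

lemma Matrix.IsDiag.l2_opNorm_inv_one_add_I_smul_le_one {n : Type*} [Fintype n] [DecidableEq n]
    {D : Matrix n n ℝ} (hD : D.IsDiag) (t : ℝ) :
    ‖(1 + (Complex.I * t) • D.map Complex.ofReal)⁻¹‖ ≤ 1 := by
  rw [hD.one_add_smul_map_ofReal]
  refine l2_opNorm_inv_diagonal_le_one fun i => ?_
  simpa [mul_assoc, ← Complex.ofReal_mul] using Complex.one_le_norm_one_add_I_mul_ofReal (t * D i i)

theorem semiImplicit_stability_general {N : ℕ}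
    (D : Matrix (Fin N) (Fin N) ℝ) (hD : D.IsDiag)
    (V₁ V₂ : Matrix (Fin N) (Fin N) ℂ)
    (τ : ℝ) (hτ : 0 < τ) (Φ0 : EuclideanSpace ℂ (Fin N)) :
    ∀ k : ℕ,
      ‖(EuclideanSpace.equiv (Fin N) ℂ).symm
          ((((1 + (Complex.I * (τ : ℂ)) • D.map Complex.ofReal)⁻¹ *
              (1 - (Complex.I * (τ : ℂ)) • (V₁ + V₂))) ^ k) *ᵥ Φ0)‖ ≤
        (1 + ‖V₁ + V₂‖ * τ) ^ k * ‖Φ0‖ := by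
  refine l2_opNorm_pow_mulVec_le ?_ Φ0
  have hexplicit := l2_opNorm_one_sub_smul_le (Complex.I * (τ : ℂ)) (V₁ + V₂)
  rw [norm_mul, Complex.norm_I, one_mul, Complex.norm_real, Real.norm_of_nonneg hτ.le,
    mul_comm τ] at hexplicit
  calc _ ≤ _ := l2_opNorm_mul _ _
    _ ≤ 1 * (1 + ‖V₁ + V₂‖ * τ) := by
      gcongr
      exact hD.l2_opNorm_inv_one_add_I_smul_le_one τ
    _ = _ := one_mul _

/-- Stability of the semi-implicit scheme: iterates satisfy
`‖Φᵏ‖₂ ≤ (1 + Eτ)ᵏ ‖Φ⁰‖₂` with `E = ‖V₁ + V₂‖₂`. -/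
theorem semiImplicit_stability {N : ℕ}
    (D : Matrix (Fin N) (Fin N) ℝ) (hD : D.IsDiag)
    (V₁ V₂ : Matrix (Fin N) (Fin N) ℂ) (h₁ : V₁.IsHermitian) (h₂ : V₂.IsHermitian)
    (τ : ℝ) (hτ : 0 < τ) (Φ0 : EuclideanSpace ℂ (Fin N)) :
    ∀ k : ℕ,
      ‖(EuclideanSpace.equiv (Fin N) ℂ).symm
          ((((1 + (Complex.I * (τ : ℂ)) • D.map Complex.ofReal)⁻¹ *
              (1 - (Complex.I * (τ : ℂ)) • (V₁ + V₂))) ^ k) *ᵥ Φ0)‖ ≤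
        (1 + ‖V₁ + V₂‖ * τ) ^ k * ‖Φ0‖ :=
  semiImplicit_stability_general D hD V₁ V₂ τ hτ Φ0
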